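/- Non-uniqueness for the adhesive beam problem: Let L > 0, ρ = μ = 1, and let Φ₀ be the prototype adhesive potential. Define u(t,x) = cos(√2·t) and v(t,x) = 1 for (t,x) ∈ [0,∞)×[0,L]. Then u ≠ v; both satisfy the same initial conditions u(0,x) = v(0,x) = 1 and ∂_t u(0,x) = ∂_t v(0,x) = 0 and (trivially, being independent of x) the free-end boundary conditions ∂²ₓ = ∂³ₓ = 0 at x = 0, L; and there exist functions h_u, h_v : [0,∞)×[0,L] → ℝ with h_u(t,x) ∈ ∂Φ₀'(u(t,x)) and h_v(t,x) ∈ ∂Φ₀'(v(t,x)) for every (t,x) (one may take h_u(t,x) = 2cos(√2·t) and h_v ≡ 0), such that ∂²_t u(t,x) = −∂⁴ₓu(t,x) − h_u(t,x) and ∂²_t v(t,x) = −∂⁴ₓv(t,x) − h_v(t,x) pointwise for all t > 0 and 0 < x < L. Hence the adhesive beam initial value problem with data u₀ ≡ 1, u₁ ≡ 0 admits two distinct solutions. -/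

import Mathlib

open MeasureTheory Filter Set intervalIntegral Real

/-!
While `|u| ≤ 1` the selection `h = 2u` of `∂Φ₀'(u)` is admissible, so any `x`-independent
solution of `u'' = -2u` with `|u| ≤ 1` solves the beam inclusion; `cos (√2 t)` is one. The
constant `1` sits at the kink of `Φ₀'`, where `∂Φ₀'(1) = [0, 2]` contains `0`, so it is a
stationary solution with the same data.
-/

/-- The prototype adhesive potential `Φ₀(s) = s²` for `|s| ≤ 1`, `Φ₀(s) = 1` for `|s| > 1`. -/
noncomputable def Phi0 (s : ℝ) : ℝ := if |s| ≤ 1 then s ^ 2 else 1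

/-- The subdifferential of the prototype adhesive force `Φ₀'`:
`∂Φ₀'(s) = {2s}` for `|s| < 1`, `{0}` for `|s| > 1`, `[0,2]` at `s = 1` and `[-2,0]` at
`s = -1`. -/
noncomputable def subdiffPhi0 (s : ℝ) : Set ℝ :=
  if |s| < 1 then {2 * s}
  else if s = 1 then Icc 0 2
  else if s = -1 then Icc (-2) 0
  else {0}

lemma deriv_cos_mul (a : ℝ) :
    deriv (fun τ => cos (a * τ)) = fun t => -(a * sin (a * t)) := by
  funext t
  simpa [mul_comm] using ((hasDerivAt_id' t).const_mul a).cos.deriv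

lemma deriv_deriv_cos_mul (a t : ℝ) :
    deriv (deriv fun τ => cos (a * τ)) t = -a ^ 2 * cos (a * t) := by
  rw [deriv_cos_mul]
  have h : HasDerivAt (fun τ => -(a * sin (a * τ))) (-(a * (cos (a * t) * (a * 1)))) t :=
    (((hasDerivAt_id' t).const_mul a).sin.const_mul a).neg
  rw [h.deriv]
  ring

lemma two_mul_mem_subdiffPhi0 {s : ℝ} (hs : |s| ≤ 1) : 2 * s ∈ subdiffPhi0 s := by
  unfold subdiffPhi0
  rcases hs.lt_or_eq with hs | hs
  · simp [hs]
  · rcases (abs_eq zero_le_one).mp hs with rfl | rfl <;> norm_num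

lemma zero_mem_subdiffPhi0 {s : ℝ} (hs : 1 ≤ |s|) : 0 ∈ subdiffPhi0 s := by
  unfold subdiffPhi0
  split_ifs with h₁
  · exact absurd h₁ hs.not_gt
  all_goals simp

theorem non_uniqueness_adhesive_beam_general
    (L : ℝ)
    (u v : ℝ → ℝ → ℝ)
    (hu : ∀ t x, u t x = Real.cos (Real.sqrt 2 * t))
    (hv : ∀ t x, v t x = 1) :
    -- the two solutions are distinct
    u ≠ v ∧
    -- same initial data u₀ ≡ 1, u₁ ≡ 0
    (∀ x ∈ Icc 0 L, u 0 x = 1 ∧ v 0 x = 1 ∧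
      deriv (fun τ => u τ x) 0 = 0 ∧ deriv (fun τ => v τ x) 0 = 0) ∧
    -- free-end boundary conditions
    (∀ t ∈ Ioi (0:ℝ),
      iteratedDeriv 2 (fun y => u t y) 0 = 0 ∧ iteratedDeriv 2 (fun y => u t y) L = 0 ∧
      iteratedDeriv 3 (fun y => u t y) 0 = 0 ∧ iteratedDeriv 3 (fun y => u t y) L = 0 ∧
      iteratedDeriv 2 (fun y => v t y) 0 = 0 ∧ iteratedDeriv 2 (fun y => v t y) L = 0 ∧
      iteratedDeriv 3 (fun y => v t y) 0 = 0 ∧ iteratedDeriv 3 (fun y => v t y) L = 0) ∧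
    -- both solve the adhesive beam equation for suitable selections of the subdifferential
    (∃ hu' hv' : ℝ → ℝ → ℝ,
      (∀ t x, hu' t x ∈ subdiffPhi0 (u t x)) ∧
      (∀ t x, hv' t x ∈ subdiffPhi0 (v t x)) ∧
      (∀ t x, hu' t x = 2 * Real.cos (Real.sqrt 2 * t)) ∧
      (∀ t x, hv' t x = 0) ∧
      (∀ t ∈ Ioi (0:ℝ), ∀ x ∈ Ioo 0 L,
        deriv (deriv (fun τ => u τ x)) t
          = -(iteratedDeriv 4 (fun y => u t y) x) - hu' t x) ∧
      (∀ t ∈ Ioi (0:ℝ), ∀ x ∈ Ioo 0 L,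
        deriv (deriv (fun τ => v τ x)) t
          = -(iteratedDeriv 4 (fun y => v t y) x) - hv' t x)) := by
  obtain rfl : u = fun t _ => cos (√2 * t) := funext₂ hu
  obtain rfl : v = fun _ _ => 1 := funext₂ hv
  have hsqrt2 : (√2) ^ 2 = 2 := sq_sqrt zero_le_two
  refine ⟨fun h => ?_, fun x _ => ?_, fun t _ => ?_, ?_⟩
  · have h0 := congrFun (congrFun h (π / √2)) 0
    rw [mul_div_cancel₀ _ (by positivity), cos_pi] at h0
    norm_num at h0
  · simp [deriv_cos_mul]
  · simp [iteratedDeriv_const]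
  · refine ⟨fun t _ => 2 * cos (√2 * t), fun _ _ => 0,
      fun t _ => two_mul_mem_subdiffPhi0 (abs_cos_le_one _),
      fun _ _ => zero_mem_subdiffPhi0 (by simp), fun _ _ => rfl, fun _ _ => rfl,
      fun t _ x _ => ?_, fun t _ x _ => ?_⟩
    · simp [deriv_deriv_cos_mul, iteratedDeriv_const, hsqrt2]
    · simp [iteratedDeriv_const]

/-- **Non-uniqueness for the adhesive beam problem.**  With `ρ = μ = 1` and the prototype
adhesive potential, the two distinct functions `u(t,x) = cos(√2 t)` and `v(t,x) = 1` both
solve the adhesive beam problem (with suitable selections `h_u ∈ ∂Φ₀'(u)`,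
`h_v ∈ ∂Φ₀'(v)`) with the same initial data `u₀ ≡ 1`, `u₁ ≡ 0` and the free-end boundary
conditions. -/
theorem non_uniqueness_adhesive_beam
    (L : ℝ) (hL : 0 < L)
    (u v : ℝ → ℝ → ℝ)
    (hu : ∀ t x, u t x = Real.cos (Real.sqrt 2 * t))
    (hv : ∀ t x, v t x = 1) :
    -- the two solutions are distinct
    u ≠ v ∧
    -- same initial data u₀ ≡ 1, u₁ ≡ 0
    (∀ x ∈ Icc 0 L, u 0 x = 1 ∧ v 0 x = 1 ∧
      deriv (fun τ => u τ x) 0 = 0 ∧ deriv (fun τ => v τ x) 0 = 0) ∧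
    -- free-end boundary conditions
    (∀ t ∈ Ioi (0:ℝ),
      iteratedDeriv 2 (fun y => u t y) 0 = 0 ∧ iteratedDeriv 2 (fun y => u t y) L = 0 ∧
      iteratedDeriv 3 (fun y => u t y) 0 = 0 ∧ iteratedDeriv 3 (fun y => u t y) L = 0 ∧
      iteratedDeriv 2 (fun y => v t y) 0 = 0 ∧ iteratedDeriv 2 (fun y => v t y) L = 0 ∧
      iteratedDeriv 3 (fun y => v t y) 0 = 0 ∧ iteratedDeriv 3 (fun y => v t y) L = 0) ∧
    -- both solve the adhesive beam equation for suitable selections of the subdifferential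
    (∃ hu' hv' : ℝ → ℝ → ℝ,
      (∀ t x, hu' t x ∈ subdiffPhi0 (u t x)) ∧
      (∀ t x, hv' t x ∈ subdiffPhi0 (v t x)) ∧
      (∀ t x, hu' t x = 2 * Real.cos (Real.sqrt 2 * t)) ∧
      (∀ t x, hv' t x = 0) ∧
      (∀ t ∈ Ioi (0:ℝ), ∀ x ∈ Ioo 0 L,
        deriv (deriv (fun τ => u τ x)) t
          = -(iteratedDeriv 4 (fun y => u t y) x) - hu' t x) ∧
      (∀ t ∈ Ioi (0:ℝ), ∀ x ∈ Ioo 0 L,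
        deriv (deriv (fun τ => v τ x)) t
          = -(iteratedDeriv 4 (fun y => v t y) x) - hv' t x)) :=
  non_uniqueness_adhesive_beam_general L u v hu hv
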